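/- Let n ≥ 2 be a natural number, let Mₖ = cos(kπ/n)·σx + sin(kπ/n)·σy for k = 1,…,n, and let |GHZ⟩ = (|0⟩^{⊗n} + |1⟩^{⊗n})/√2 ∈ ℂ^{2ⁿ}. Then, as 2ⁿ×2ⁿ complex matrices, (1/2)·[ 𝟙^{⊗n} − Σ_{ℓ=±1} ((𝟙 + ℓ·σz)/2)^{⊗n} − (1/n)·Σ_{k=1}^{n} (−1)^k · Mₖ^{⊗n} ] = (1/2)·𝟙^{⊗n} − |GHZ⟩⟨GHZ|. -/

import Mathlib

open Matrix Real

noncomputable def σx : Matrix (Fin 2) (Fin 2) ℂ := !![0, 1; 1, 0]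
noncomputable def σy : Matrix (Fin 2) (Fin 2) ℂ := !![0, -Complex.I; Complex.I, 0]
noncomputable def σz : Matrix (Fin 2) (Fin 2) ℂ := !![1, 0; 0, -1]

/-- n-fold Kronecker power A^{⊗n} of a 2×2 matrix, on the index set Fin n → Fin 2. -/
noncomputable def kronPow (n : ℕ) (A : Matrix (Fin 2) (Fin 2) ℂ) :
    Matrix (Fin n → Fin 2) (Fin n → Fin 2) ℂ :=
  Matrix.of fun i j => ∏ t, A (i t) (j t)

/-- n-fold tensor power v^{⊗n} of a vector in ℂ². -/
noncomputable def tensPow (n : ℕ) (v : Fin 2 → ℂ) : (Fin n → Fin 2) → ℂ :=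
  fun i => ∏ t, v (i t)

/-- The n-qubit GHZ state (|0⟩^{⊗n} + |1⟩^{⊗n})/√2. -/
noncomputable def GHZ (n : ℕ) : (Fin n → Fin 2) → ℂ :=
  fun i => (tensPow n ![1, 0] i + tensPow n ![0, 1] i) / (Real.sqrt 2 : ℂ)

/-!
Entrywise `M_θ = [[0, e^{-iθ}], [e^{iθ}, 0]]`, so `M_θ^{⊗n}` is supported on pairs of complementary
bit strings `(i, ī)`, where its entry is `e^{iθ(2|i| - n)}`, `|i|` being the number of ones of `i`.
For `θ = kπ/n` the sign `(-1)^k` turns this into `ζ^{k|i|}` with `ζ = e^{2πi/n}`, and summing over a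
full period of `k` leaves `n` exactly when `n ∣ |i|`, i.e. for `i = 0…0` and `i = 1…1`. Hence
`(1/n) Σ_k (-1)^k M_k^{⊗n} = |0…0⟩⟨1…1| + |1…1⟩⟨0…0|`, the two projectors contribute
`|0…0⟩⟨0…0| + |1…1⟩⟨1…1|`, and these four terms add up to `2 |GHZ⟩⟨GHZ|`.
-/

lemma sum_Icc_pow_of_pow_eq_one {K : Type*} [DivisionRing K] [DecidableEq K] {z : K} {n : ℕ}
    (hz : z ^ n = 1) : ∑ k ∈ Finset.Icc 1 n, z ^ k = if z = 1 then (n : K) else 0 := by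
  split_ifs with h
  · simp [h]
  · rw [← Finset.Ico_add_one_right_eq_Icc, geom_sum_Ico h (by omega), pow_succ, hz, one_mul,
      pow_one, sub_self, zero_div]

lemma IsPrimitiveRoot.sum_Icc_pow_pow {K : Type*} [Field K] {ζ : K} {n : ℕ}
    (hζ : IsPrimitiveRoot ζ n) (m : ℕ) :
    ∑ k ∈ Finset.Icc 1 n, (ζ ^ m) ^ k = if n ∣ m then (n : K) else 0 := by
  classical
  rw [sum_Icc_pow_of_pow_eq_one (by rw [← pow_mul, mul_comm, pow_mul, hζ.pow_eq_one, one_pow])]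
  simp only [hζ.pow_eq_one_iff_dvd]

lemma neg_one_pow_mul_exp_eq_exp_pow_pow {n : ℕ} (hn : n ≠ 0) (m k : ℕ) :
    (-1 : ℂ) ^ k * Complex.exp ((2 * m - n) * (k * π / n : ℝ) * Complex.I) =
      (Complex.exp (2 * π * Complex.I / n) ^ m) ^ k := by
  rw [← Complex.exp_pi_mul_I, ← Complex.exp_nat_mul, ← Complex.exp_add, ← Complex.exp_nat_mul,
    ← Complex.exp_nat_mul]
  congr 1
  push_cast
  field_simp
  ring

-- Reducible, so that lemmas about `M_θ` rewrite the unfolded expression of the statement.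
noncomputable abbrev equatorialPauli (θ : ℝ) : Matrix (Fin 2) (Fin 2) ℂ := cos θ • σx + sin θ • σy

lemma equatorialPauli_apply_self (θ : ℝ) (a : Fin 2) : (equatorialPauli θ) a a = 0 := by
  fin_cases a <;> simp [σx, σy]

lemma equatorialPauli_apply_of_ne (θ : ℝ) {a b : Fin 2} (hab : a ≠ b) :
    (equatorialPauli θ) a b = Complex.exp ((2 * (a : ℕ) - 1) * θ * Complex.I) := by
  fin_cases a <;> fin_cases b
  · exact absurd rfl hab
  · simp [σx, σy]
    rw [← neg_mul (θ : ℂ), ← Complex.cos_sub_sin_I]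
    ring
  · norm_num [σx, σy, ← Complex.cos_add_sin_I]
  · exact absurd rfl hab

section KroneckerPower

variable {n : ℕ}

lemma kronPow_single (a b : Fin 2) :
    kronPow n (single a b 1) = single (fun _ => a) (fun _ => b) (1 : ℂ) := by
  ext i j
  simp only [kronPow, of_apply, single_apply, Finset.prod_boole, Finset.mem_univ,
    true_implies, funext_iff, forall_and, eq_comm]

lemma tensPow_single (a : Fin 2) :
    tensPow n (Pi.single a 1) = Pi.single (fun _ => a) (1 : ℂ) := by
  ext i
  simp only [tensPow, Pi.single_apply, Finset.prod_boole, Finset.mem_univ, true_implies, funext_iff]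

lemma kronPow_equatorialPauli_apply_of_exists_eq (θ : ℝ) {i j : Fin n → Fin 2}
    (h : ∃ t, i t = j t) :
    kronPow n (equatorialPauli θ) i j = 0 := by
  obtain ⟨t, ht⟩ := h
  exact Finset.prod_eq_zero (Finset.mem_univ t) (by rw [ht, equatorialPauli_apply_self])

lemma kronPow_equatorialPauli_apply_of_forall_ne (θ : ℝ) {i j : Fin n → Fin 2}
    (h : ∀ t, i t ≠ j t) :
    kronPow n (equatorialPauli θ) i j =
      Complex.exp ((2 * ((∑ t, (i t : ℕ) : ℕ) : ℂ) - n) * θ * Complex.I) := by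
  simp only [kronPow, of_apply, equatorialPauli_apply_of_ne θ (h _), ← Complex.exp_sum]
  push_cast
  rw [← Finset.sum_mul, ← Finset.sum_mul, Finset.sum_sub_distrib, ← Finset.mul_sum]
  simp

lemma forall_ne_and_dvd_sum_iff {i j : Fin n → Fin 2} :
    ((∀ t, i t ≠ j t) ∧ n ∣ ∑ t, (i t : ℕ)) ↔
      (i = fun _ => 0) ∧ (j = fun _ => 1) ∨ (i = fun _ => 1) ∧ (j = fun _ => 0) := by
  constructor
  · rintro ⟨hne, hdvd⟩
    have hle : ∀ t ∈ Finset.univ, (i t : ℕ) ≤ 1 := fun t _ => Fin.is_le (i t)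
    rcases (Finset.sum_le_sum hle).lt_or_eq with hlt | heq
    · have hzero : ∀ t, (i t : ℕ) = 0 := by
        simpa using Nat.eq_zero_of_dvd_of_lt hdvd (by simpa using hlt)
      refine Or.inl ⟨funext fun t => ?_, funext fun t => ?_⟩ <;> have := hne t <;>
        have := hzero t <;> omega
    · have hone : ∀ t, (i t : ℕ) = 1 := by
        simpa using (Finset.sum_eq_sum_iff_of_le hle).1 heq
      refine Or.inr ⟨funext fun t => ?_, funext fun t => ?_⟩ <;> have := hne t <;>
        have := hone t <;> omega
  · rintro (⟨rfl, rfl⟩ | ⟨rfl, rfl⟩) <;> simp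

lemma sum_neg_one_pow_mul_kronPow_equatorialPauli_apply (hn : n ≠ 0) (i j : Fin n → Fin 2) :
    ∑ k ∈ Finset.Icc 1 n, (-1 : ℂ) ^ k * kronPow n (equatorialPauli (k * π / n)) i j
      = if (∀ t, i t ≠ j t) ∧ n ∣ ∑ t, (i t : ℕ) then (n : ℂ) else 0 := by
  by_cases h : ∀ t, i t ≠ j t
  · simp only [kronPow_equatorialPauli_apply_of_forall_ne _ h,
      neg_one_pow_mul_exp_eq_exp_pow_pow hn, (Complex.isPrimitiveRoot_exp n hn).sum_Icc_pow_pow]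
    simp [h]
  · push Not at h
    simp [kronPow_equatorialPauli_apply_of_exists_eq _ h, h]

lemma sum_neg_one_pow_smul_kronPow_equatorialPauli (hn : n ≠ 0) :
    ∑ k ∈ Finset.Icc 1 n, (-1 : ℂ) ^ k • kronPow n (equatorialPauli (k * π / n))
      = (n : ℂ) • (single (fun _ => 0) (fun _ => 1) 1 + single (fun _ => 1) (fun _ => 0) 1) := by
  have hconst : (fun _ : Fin n => (0 : Fin 2)) ≠ fun _ => 1 := fun h =>
    zero_ne_one (congrFun h ⟨0, Nat.pos_of_ne_zero hn⟩)
  ext i j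
  simp only [Matrix.sum_apply, Matrix.smul_apply, smul_eq_mul, Matrix.add_apply, single_apply,
    sum_neg_one_pow_mul_kronPow_equatorialPauli_apply hn, forall_ne_and_dvd_sum_iff]
  split_ifs <;> grind

lemma sum_kronPow_half_one_add_smul_σz :
    ∑ l ∈ ({1, -1} : Finset ℝ), kronPow n ((1 / 2 : ℂ) • ((1 : Matrix (Fin 2) (Fin 2) ℂ) + l • σz))
      = single (fun _ => 0) (fun _ => 0) 1 + single (fun _ => 1) (fun _ => 1) 1 := by
  have hplus : (1 / 2 : ℂ) • ((1 : Matrix (Fin 2) (Fin 2) ℂ) + (1 : ℝ) • σz) = single 0 0 1 := by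
    ext a b; fin_cases a <;> fin_cases b <;> norm_num [σz]
  have hminus : (1 / 2 : ℂ) • ((1 : Matrix (Fin 2) (Fin 2) ℂ) + (-1 : ℝ) • σz) = single 1 1 1 := by
    ext a b; fin_cases a <;> fin_cases b <;> norm_num [σz]
  rw [Finset.sum_pair (by norm_num), hplus, hminus, kronPow_single, kronPow_single]

lemma vecMulVec_GHZ :
    vecMulVec (GHZ n) (star (GHZ n)) = (1 / 2 : ℂ) •
      (single (fun _ => 0) (fun _ => 0) 1 + single (fun _ => 0) (fun _ => 1) 1 +
        single (fun _ => 1) (fun _ => 0) 1 + single (fun _ => 1) (fun _ => 1) 1) := by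
  have h10 : (![1, 0] : Fin 2 → ℂ) = Pi.single 0 1 := by ext a; fin_cases a <;> rfl
  have h01 : (![0, 1] : Fin 2 → ℂ) = Pi.single 1 1 := by ext a; fin_cases a <;> rfl
  have hGHZ : GHZ n = (Real.sqrt 2 : ℂ)⁻¹ •
      (Pi.single (fun _ => 0) 1 + Pi.single (fun _ => 1) 1) := by
    ext i
    simp [GHZ, h10, h01, tensPow_single, div_eq_inv_mul]
  have hsqrt : (Real.sqrt 2 : ℂ)⁻¹ * (Real.sqrt 2 : ℂ)⁻¹ = 1 / 2 := by
    rw [← mul_inv, ← Complex.ofReal_mul, Real.mul_self_sqrt zero_le_two]; norm_num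
  simp only [hGHZ, smul_add, star_add, star_smul, star_inv₀, RCLike.star_def, Complex.conj_ofReal,
    Pi.star_single, star_one, vecMulVec_add, vecMulVec_smul, add_vecMulVec, smul_vecMulVec,
    smul_smul, hsqrt, single_eq_single_vecMulVec_single]
  abel

end KroneckerPower

/-- the economical local-measurement decomposition of the GHZ witness:
(1/2)[𝟙^{⊗n} − Σ_{ℓ=±1} ((𝟙+ℓσz)/2)^{⊗n} − (1/n) Σ_{k=1}^n (−1)^k Mₖ^{⊗n}]
  = (1/2)𝟙^{⊗n} − |GHZ⟩⟨GHZ|, with Mₖ = cos(kπ/n)σx + sin(kπ/n)σy. -/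
theorem stmt13 (n : ℕ) (hn : 2 ≤ n) :
    (1 / 2 : ℂ) • ((1 : Matrix (Fin n → Fin 2) (Fin n → Fin 2) ℂ)
        - ∑ l ∈ ({1, -1} : Finset ℝ),
            kronPow n ((1 / 2 : ℂ) • ((1 : Matrix (Fin 2) (Fin 2) ℂ) + l • σz))
        - (n : ℂ)⁻¹ • ∑ k ∈ Finset.Icc 1 n, ((-1 : ℂ)) ^ k •
            kronPow n (cos (k * π / n) • σx + sin (k * π / n) • σy))
      = (1 / 2 : ℂ) • (1 : Matrix (Fin n → Fin 2) (Fin n → Fin 2) ℂ)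
        - vecMulVec (GHZ n) (star (GHZ n)) := by
  have hn0 : n ≠ 0 := by omega
  rw [sum_kronPow_half_one_add_smul_σz, sum_neg_one_pow_smul_kronPow_equatorialPauli hn0,
    vecMulVec_GHZ, smul_smul, inv_mul_cancel₀ (Nat.cast_ne_zero.2 hn0), one_smul]
  module
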